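/- arXiv:1907.12686 — 5 statements merged into one kernel-verified Lean document; each statement's English description precedes it below -/
import Mathlib

section
/- (Herbst argument) Let (Ω, μ) be a probability space, f : Ω → ℝ bounded and measurable, and D > 0. Suppose that for every λ > 0, Ent_μ(exp ∘ (λf)) ≤ (1/2)·λ²·D·∫ exp(λ f) dμ. Then for every λ > 0, ∫ exp(λ(f(x) − 𝔼_μ(f))) dμ(x) ≤ exp((1/2)λ²D). -/
/-!
Let `Λ(λ) = log 𝔼 e^{λf}` be the cumulant generating function of `f`. The entropy of `e^{λf}`
equals `𝔼 e^{λf} · (λ Λ'(λ) - Λ(λ))`, so the hypothesis says exactly that the derivative of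
`Λ(λ)/λ - Dλ/2` is nonpositive on `(0, ∞)`. Hence `Λ(λ)/λ - Dλ/2` is bounded by its limit
`Λ'(0) = 𝔼 f` as `λ → 0⁺`, that is `Λ(λ) ≤ λ 𝔼 f + Dλ²/2`, and exponentiating gives the claim.
-/

open MeasureTheory Real Filter Set Topology ProbabilityTheory

section Calculus

variable {Λ : ℝ → ℝ} {c : ℝ}

lemma antitoneOn_div_sub_mul_of_mul_deriv_sub_le
    (hdiff : ∀ l, 0 < l → DifferentiableAt ℝ Λ l)
    (hΛ : ∀ l, 0 < l → l * deriv Λ l - Λ l ≤ c * l ^ 2) :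
    AntitoneOn (fun l => Λ l / l - c * l) (Ioi 0) := by
  have hderiv : ∀ l, 0 < l →
      HasDerivAt (fun l => Λ l / l - c * l) ((deriv Λ l * l - Λ l * 1) / l ^ 2 - c * 1) l :=
    fun l hl => ((hdiff l hl).hasDerivAt.div (hasDerivAt_id l) hl.ne').sub
      ((hasDerivAt_id l).const_mul c)
  refine antitoneOn_of_hasDerivWithinAt_nonpos (convex_Ioi 0)
    (fun l hl => (hderiv l hl).continuousAt.continuousWithinAt)
    (fun l hl => (hderiv l (interior_subset hl)).hasDerivWithinAt) fun l hl => ?_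
  have hl : 0 < l := interior_subset hl
  rw [sub_nonpos, div_le_iff₀ (by positivity)]
  linarith [hΛ l hl]

lemma le_deriv_zero_mul_add_of_mul_deriv_sub_le (hΛ0 : Λ 0 = 0)
    (hdiff : ∀ l, 0 ≤ l → DifferentiableAt ℝ Λ l)
    (hΛ : ∀ l, 0 < l → l * deriv Λ l - Λ l ≤ c * l ^ 2) {L : ℝ} (hL : 0 < L) :
    Λ L ≤ deriv Λ 0 * L + c * L ^ 2 := by
  have hanti := antitoneOn_div_sub_mul_of_mul_deriv_sub_le (fun l hl => hdiff l hl.le) hΛ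
  have hlim : Tendsto (fun l => Λ l / l - c * l) (𝓝[>] 0) (𝓝 (deriv Λ 0 - c * 0)) := by
    refine Tendsto.sub ?_
      (((continuous_const_mul c).tendsto' 0 _ rfl).mono_left nhdsWithin_le_nhds)
    simpa [hΛ0, div_eq_inv_mul] using (hdiff 0 le_rfl).hasDerivAt.tendsto_slope_zero_right
  have hbound : Λ L / L - c * L ≤ deriv Λ 0 := by
    refine ge_of_tendsto (by simpa using hlim) ?_
    filter_upwards [Ioo_mem_nhdsGT hL] with l hl
    exact hanti hl.1 hL hl.2.le
  have hmul := mul_le_mul_of_nonneg_left hbound hL.le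
  rw [mul_sub, mul_div_cancel₀ _ hL.ne'] at hmul
  linarith

end Calculus

namespace ProbabilityTheory

variable {Ω : Type*} [MeasurableSpace Ω] {μ : Measure Ω} {X : Ω → ℝ}

noncomputable def entropy (μ : Measure Ω) (h : Ω → ℝ) : ℝ :=
  ∫ ω, h ω * log (h ω) ∂μ - (∫ ω, h ω ∂μ) * log (∫ ω, h ω ∂μ)

lemma integrableExpSet_eq_univ_of_abs_le [IsFiniteMeasure μ] (hX : AEMeasurable X μ) {C : ℝ}
    (hC : ∀ ω, |X ω| ≤ C) : integrableExpSet X μ = univ :=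
  eq_univ_of_forall fun _ => integrable_exp_mul_of_mem_Icc hX
    (ae_of_all _ fun ω => abs_le.mp (hC ω))

lemma entropy_exp_mul_eq {t : ℝ} (ht : t ∈ interior (integrableExpSet X μ)) :
    entropy μ (fun ω => exp (t * X ω))
      = mgf X μ t * (t * deriv (cgf X μ) t - cgf X μ t) := by
  rcases eq_zero_or_neZero μ with rfl | _
  · simp [entropy, mgf_zero_measure]
  have hmgf : mgf X μ t ≠ 0 :=
    (mgf_pos_iff.mpr (interior_subset (s := integrableExpSet X μ) ht)).ne'
  simp_rw [entropy, log_exp, deriv_cgf ht, cgf]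
  have hlin : ∫ ω, exp (t * X ω) * (t * X ω) ∂μ = t * ∫ ω, X ω * exp (t * X ω) ∂μ := by
    rw [← integral_const_mul]
    congr with ω
    ring
  rw [hlin]
  unfold mgf at hmgf ⊢
  field_simp

end ProbabilityTheory

theorem herbst_argument_general {Ω : Type*} [MeasurableSpace Ω] (μ : Measure Ω)
    [IsProbabilityMeasure μ] (f : Ω → ℝ) (hfm : Measurable f)
    (C : ℝ) (hfb : ∀ x, |f x| ≤ C) (D : ℝ)
    (hEnt : ∀ l : ℝ, 0 < l →
      (∫ x, Real.exp (l * f x) * Real.log (Real.exp (l * f x)) ∂μ)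
          - (∫ x, Real.exp (l * f x) ∂μ) * Real.log (∫ x, Real.exp (l * f x) ∂μ)
        ≤ (1 / 2) * l ^ 2 * D * ∫ x, Real.exp (l * f x) ∂μ) :
    ∀ l : ℝ, 0 < l →
      (∫ x, Real.exp (l * (f x - ∫ y, f y ∂μ)) ∂μ) ≤ Real.exp ((1 / 2) * l ^ 2 * D) := by
  have hset := integrableExpSet_eq_univ_of_abs_le (μ := μ) hfm.aemeasurable hfb
  have hinterior : ∀ t, t ∈ interior (integrableExpSet f μ) := by simp [hset]
  have hexp : ∀ t, Integrable (fun x => exp (t * f x)) μ := fun t =>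
    integrable_of_mem_integrableExpSet (hset ▸ mem_univ t)
  have hslope : ∀ l, 0 < l → l * deriv (cgf f μ) l - cgf f μ l ≤ (1 / 2) * D * l ^ 2 := by
    intro l hl
    have hEnt' : mgf f μ l * (l * deriv (cgf f μ) l - cgf f μ l)
        ≤ mgf f μ l * ((1 / 2) * D * l ^ 2) :=
      (entropy_exp_mul_eq (hinterior l)).symm.trans_le ((hEnt l hl).trans_eq (by unfold mgf; ring))
    exact le_of_mul_le_mul_left hEnt' (mgf_pos (hexp l))
  intro l hl
  have hcgf := le_deriv_zero_mul_add_of_mul_deriv_sub_le cgf_zero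
    (fun t _ => (analyticAt_cgf (hinterior t)).differentiableAt) hslope hl
  rw [deriv_cgf_zero (hinterior 0), probReal_univ, div_one] at hcgf
  calc ∫ x, exp (l * (f x - ∫ y, f y ∂μ)) ∂μ = exp (cgf f μ l - l * ∫ y, f y ∂μ) := by
        change mgf (fun x => f x + -∫ y, f y ∂μ) μ l = _
        rw [mgf_add_const, ← exp_cgf (hexp l), ← exp_add]
        ring_nf
    _ ≤ exp ((1 / 2) * l ^ 2 * D) := by
        gcongr
        linarith

/-- The Herbst argument. -/
theorem herbst_argument {Ω : Type*} [MeasurableSpace Ω] (μ : Measure Ω)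
    [IsProbabilityMeasure μ] (f : Ω → ℝ) (hfm : Measurable f)
    (C : ℝ) (hfb : ∀ x, |f x| ≤ C) (D : ℝ) (hD : 0 < D)
    (hEnt : ∀ l : ℝ, 0 < l →
      (∫ x, Real.exp (l * f x) * Real.log (Real.exp (l * f x)) ∂μ)
          - (∫ x, Real.exp (l * f x) ∂μ) * Real.log (∫ x, Real.exp (l * f x) ∂μ)
        ≤ (1 / 2) * l ^ 2 * D * ∫ x, Real.exp (l * f x) ∂μ) :
    ∀ l : ℝ, 0 < l →
      (∫ x, Real.exp (l * (f x - ∫ y, f y ∂μ)) ∂μ) ≤ Real.exp ((1 / 2) * l ^ 2 * D) :=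
  herbst_argument_general μ f hfm C hfb D hEnt
end

section
/- Let f : ℝ_{>0} → ℝ_{≥0} be a function such that M := sup_{ξ>0} f(ξ)/ξ < ∞ and f(ξ + ζ) ≥ f(ξ) + f(ζ) − f(ξ)·f(ζ) for all ξ, ζ > 0. Then the limit lim_{ζ→0⁺} f(ζ)/ζ exists and is finite. -/
/-!
Near `0` we have `f < 1`, and `g ζ := -log (1 - f ζ)` turns the hypothesis
`1 - f (ξ + ζ) ≤ (1 - f ξ) (1 - f ζ)` into superadditivity of the nonnegative function `g`.
A continuous Fekete argument shows that `g ζ / ζ` tends to its infimum as `ζ → 0⁺`, and since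
`f → 0` the bounds `(1 - f) g ≤ f ≤ g` squeeze `f ζ / ζ` to the same limit.
-/

open Filter Topology Set Real

namespace Real

variable {x : ℝ}

theorem le_neg_log_one_sub (hx : x < 1) : x ≤ -log (1 - x) := by
  linarith [log_le_sub_one_of_pos (sub_pos.2 hx)]

theorem one_sub_mul_neg_log_one_sub_le (hx : x < 1) : (1 - x) * -log (1 - x) ≤ x := by
  have hpos : 0 < 1 - x := sub_pos.2 hx
  have h := mul_le_mul_of_nonneg_left (one_sub_inv_le_log_of_pos hpos) hpos.le
  rw [mul_sub, mul_inv_cancel₀ hpos.ne'] at h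
  linarith

theorem neg_log_one_sub_add_le {a b c : ℝ} (ha : a < 1) (hb : b < 1) (hc : c < 1)
    (habc : a + b - a * b ≤ c) : -log (1 - a) + -log (1 - b) ≤ -log (1 - c) := by
  have key : 1 - c ≤ (1 - a) * (1 - b) := by linarith
  have hlog := log_le_log (sub_pos.2 hc) key
  rw [log_mul (sub_pos.2 ha).ne' (sub_pos.2 hb).ne'] at hlog
  linarith

end Real

def SuperadditiveBelow (δ : ℝ) (g : ℝ → ℝ) : Prop :=
  ∀ s > 0, ∀ t > 0, s + t < δ → g s + g t ≤ g (s + t)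

namespace SuperadditiveBelow

variable {g : ℝ → ℝ} {δ : ℝ}

theorem natCast_mul_le (hg : SuperadditiveBelow δ g) {s : ℝ} (hs : 0 < s) {n : ℕ}
    (hn : 1 ≤ n) (hns : n * s < δ) : n * g s ≤ g (n * s) := by
  induction n, hn using Nat.le_induction with
  | base => simp
  | succ n hn ih =>
    push_cast at hns ⊢
    have hn0 : (0 : ℝ) < n * s := by positivity
    calc ((n : ℝ) + 1) * g s = n * g s + g s := by ring
      _ ≤ g (n * s) + g s := by gcongr; exact ih (by linarith)
      _ ≤ g ((n + 1) * s) := by rw [add_mul, one_mul]; exact hg _ hn0 _ hs (by linarith)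

theorem monotoneOn (hg : SuperadditiveBelow δ g) (hg0 : ∀ t ∈ Ioo 0 δ, 0 ≤ g t) :
    MonotoneOn g (Ioo 0 δ) := by
  intro s hs t ht hst
  rcases hst.eq_or_lt with rfl | hlt
  · exact le_rfl
  · have h := hg s hs.1 (t - s) (sub_pos.2 hlt) (by linarith [ht.2])
    rw [add_sub_cancel] at h
    linarith [hg0 (t - s) ⟨sub_pos.2 hlt, by linarith [hs.1, ht.2]⟩]

-- Fekete's comparison `g s / s ≤ g t / t`, losing one `s` to the remainder of `t` modulo `s`.
theorem div_le_div_sub (hg : SuperadditiveBelow δ g) (hg0 : ∀ t ∈ Ioo 0 δ, 0 ≤ g t)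
    {s t : ℝ} (hs : 0 < s) (hst : s < t) (ht : t < δ) : g s / s ≤ g t / (t - s) := by
  set n := ⌊t / s⌋₊
  have hn : 1 ≤ n := Nat.le_floor (by rw [Nat.cast_one, one_le_div hs]; exact hst.le)
  have hns : n * s ≤ t := (le_div_iff₀ hs).1 (Nat.floor_le (div_pos (hs.trans hst) hs).le)
  have hlt : t - s < n * s := by
    have := (div_lt_iff₀ hs).1 (Nat.lt_floor_add_one (t / s)); linarith
  have hn0 : (0 : ℝ) < n * s := by positivity
  have hgn : n * g s ≤ g t :=
    (hg.natCast_mul_le hs hn (hns.trans_lt ht)).trans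
      (hg.monotoneOn hg0 ⟨hn0, hns.trans_lt ht⟩ ⟨hs.trans hst, ht⟩ hns)
  rw [div_le_div_iff₀ hs (sub_pos.2 hst)]
  calc g s * (t - s) ≤ g s * (n * s) := by gcongr; exact hg0 s ⟨hs, hst.trans ht⟩
    _ = n * g s * s := by ring
    _ ≤ g t * s := by gcongr

theorem tendsto_div_sInf (hg : SuperadditiveBelow δ g) (hg0 : ∀ t ∈ Ioo 0 δ, 0 ≤ g t)
    (hδ : 0 < δ) :
    Tendsto (fun t => g t / t) (𝓝[>] 0) (𝓝 (sInf ((fun t => g t / t) '' Ioo 0 δ))) := by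
  set S := (fun t => g t / t) '' Ioo 0 δ
  have hS : BddBelow S := ⟨0, by rintro _ ⟨t, ht, rfl⟩; exact div_nonneg (hg0 t ht) ht.1.le⟩
  rw [tendsto_order]
  refine ⟨fun a ha => ?_, fun a ha => ?_⟩
  · filter_upwards [Ioo_mem_nhdsGT hδ] with s hs
    exact ha.trans_le (csInf_le hS (mem_image_of_mem _ hs))
  · obtain ⟨_, ⟨t, ht, rfl⟩, hta⟩ :=
      exists_lt_of_csInf_lt ((nonempty_Ioo.2 hδ).image _) ha
    have hlim : Tendsto (fun s => g t / (t - s)) (𝓝[>] 0) (𝓝 (g t / t)) := by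
      have : ContinuousAt (fun s => g t / (t - s)) 0 :=
        continuousAt_const.div (continuousAt_const.sub continuousAt_id)
          (by simpa using ht.1.ne')
      simpa using this.tendsto.mono_left nhdsWithin_le_nhds
    filter_upwards [hlim.eventually (gt_mem_nhds hta), Ioo_mem_nhdsGT ht.1] with s hlt hs
    exact (hg.div_le_div_sub hg0 hs.1 hs.2 ht.2).trans_lt hlt

end SuperadditiveBelow

/-- Convergence lemma for almost superadditive functions. -/
theorem tendsto_div_of_superadditive (f : ℝ → ℝ) (hf0 : ∀ ξ > 0, 0 ≤ f ξ)
    (hM : ∃ M : ℝ, ∀ ξ > 0, f ξ / ξ ≤ M)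
    (hsup : ∀ ξ > 0, ∀ ζ > 0, f ξ + f ζ - f ξ * f ζ ≤ f (ξ + ζ)) :
    ∃ L : ℝ, Filter.Tendsto (fun ξ => f ξ / ξ) (nhdsWithin 0 (Set.Ioi 0)) (nhds L) := by
  obtain ⟨M, hM⟩ := hM
  have hf_lim : Tendsto f (𝓝[>] 0) (𝓝 0) := by
    have hlin : Tendsto (fun ζ : ℝ => M * ζ) (𝓝[>] 0) (𝓝 0) := by
      simpa using ((continuous_const_mul M).tendsto 0).mono_left nhdsWithin_le_nhds
    refine squeeze_zero' ?_ ?_ hlin <;> filter_upwards [self_mem_nhdsWithin] with ζ hζ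
    exacts [hf0 ζ hζ, (div_le_iff₀ hζ).1 (hM ζ hζ)]
  obtain ⟨δ, hδ, hf_lt⟩ :=
    mem_nhdsGT_iff_exists_Ioo_subset.1 (hf_lim.eventually (gt_mem_nhds one_pos))
  set g := fun ζ => -log (1 - f ζ)
  have hg0 : ∀ t ∈ Ioo 0 δ, 0 ≤ g t := fun t ht =>
    (hf0 t ht.1).trans (le_neg_log_one_sub (hf_lt ht))
  have hg : SuperadditiveBelow δ g := fun s hs t ht hst =>
    neg_log_one_sub_add_le (hf_lt ⟨hs, by linarith⟩) (hf_lt ⟨ht, by linarith⟩)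
      (hf_lt ⟨add_pos hs ht, hst⟩) (hsup s hs t ht)
  have hg_lim := hg.tendsto_div_sInf hg0 hδ
  have hlower := ((tendsto_const_nhds (x := (1 : ℝ))).sub hf_lim).mul hg_lim
  rw [sub_zero, one_mul] at hlower
  refine ⟨_, tendsto_of_tendsto_of_tendsto_of_le_of_le' hlower hg_lim ?_ ?_⟩ <;>
    filter_upwards [Ioo_mem_nhdsGT hδ] with ζ hζ
  · rw [← mul_div_assoc]
    exact div_le_div_of_nonneg_right (one_sub_mul_neg_log_one_sub_le (hf_lt hζ)) hζ.1.le
  · exact div_le_div_of_nonneg_right (le_neg_log_one_sub (hf_lt hζ)) hζ.1.le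
end

section
/- Let f : ℝ_{>0} → ℝ_{≥0} satisfy M := sup_{ξ>0} f(ξ)/ξ < ∞ and f(ξ+ζ) ≥ f(ξ) + f(ζ) − f(ξ)f(ζ) for all ξ, ζ > 0. Then for all ξ > 0 and all positive integers k, f(kξ)/(kξ) ≥ f(ξ)/ξ − M²·k·ξ. -/
/-- Quantitative lower bound for `f (kξ)/(kξ)` for almost superadditive `f`. -/
theorem div_nat_mul_lower_bound (f : ℝ → ℝ) (hf0 : ∀ ξ > 0, 0 ≤ f ξ)
    (M : ℝ) (hM : ∀ ξ > 0, f ξ / ξ ≤ M)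
    (hsup : ∀ ξ > 0, ∀ ζ > 0, f ξ + f ζ - f ξ * f ζ ≤ f (ξ + ζ))
    (ξ : ℝ) (hξ : 0 < ξ) (k : ℕ) (hk : 0 < k) :
    f ξ / ξ - M ^ 2 * k * ξ ≤ f (k * ξ) / (k * ξ) := by
  have hM0 : 0 ≤ M := le_trans (div_nonneg (hf0 ξ hξ) hξ.le) (hM ξ hξ)
  have h3 : f ξ ≤ M * ξ := by
    have := hM ξ hξ; rwa [div_le_iff₀ hξ] at this
  have key : ∀ n : ℕ, 0 < n → (n : ℝ) * f ξ - M ^ 2 * ξ ^ 2 * n ^ 2 ≤ f (n * ξ) := by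
    intro n hn
    induction n with
    | zero => omega
    | succ m ih =>
      rcases Nat.eq_zero_or_pos m with h0 | hm
      · subst h0
        push_cast
        simp only [one_mul]
        nlinarith [sq_nonneg (M * ξ), hf0 ξ hξ]
      · have hmξ : (0 : ℝ) < m * ξ := by positivity
        have h1 := hsup (m * ξ) hmξ ξ hξ
        have h2 : f (m * ξ) ≤ M * (m * ξ) := by
          have := hM (m * ξ) hmξ; rwa [div_le_iff₀ hmξ] at this
        have h4 := hf0 (m * ξ) hmξ
        have h5 := hf0 ξ hξ
        have ih' := ih hm
        have hcast : ((m + 1 : ℕ) : ℝ) * ξ = m * ξ + ξ := by push_cast; ring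
        rw [hcast]
        have hprod : f (m * ξ) * f ξ ≤ M * (m * ξ) * (M * ξ) :=
          mul_le_mul h2 h3 h5 (mul_nonneg hM0 hmξ.le)
        push_cast
        nlinarith
  have hkpos : (0 : ℝ) < (k : ℝ) := by exact_mod_cast hk
  have hkξ : (0 : ℝ) < k * ξ := by positivity
  rw [le_div_iff₀ hkξ]
  have hfx : f ξ / ξ * ξ = f ξ := div_mul_cancel₀ _ hξ.ne'
  nlinarith [key k hk, hf0 (k * ξ) hkξ]
end

section
/- Let φ be a diffuse submeasure on a Boolean algebra 𝒜 and let μ : 𝒜 → ℝ be a (finitely additive, nonnegative) measure with 0 ≠ μ ≤ φ. Then for every ξ > 0, h_φ(ξ) ≤ 1/μ(1), where h_φ(ξ) := c_𝒜(𝒜_{φ,ξ})/ξ with 𝒜_{φ,ξ} = {A ∈ 𝒜 : φ(A) ≤ ξ} and c_𝒜 the covering number. In particular, if φ is non-pathological then h_φ is bounded. -/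
/-! The atoms of the subalgebra generated by `C₀, …, C_{n-1}` partition unity, and every nonzero
atom lies below at least `covMult C` of the `Cᵢ`. Summing `μ` over the atoms therefore gives
`covMult C · μ ⊤ ≤ ∑ μ (Cᵢ) ≤ n ξ` as soon as `μ ≤ φ ≤ ξ` on every `Cᵢ`, so the covering number of
`{A | φ A ≤ ξ}` is at most `ξ / μ ⊤`. -/

/-- The "atom" of the subalgebra generated by the finite sequence `C`,
corresponding to a choice `s` of sides. -/
def atomOf {α : Type*} [BooleanAlgebra α] {m : ℕ} (C : Fin m → α) (s : Fin m → Bool) : α :=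
  Finset.univ.inf (fun i => if s i then C i else (C i)ᶜ)

/-- The covering multiplicity of a finite sequence in a Boolean algebra: the largest `k`
such that every nonzero atom of the generated subalgebra lies below at least `k` of the `C i`. -/
noncomputable def covMult {α : Type*} [BooleanAlgebra α] {m : ℕ} (C : Fin m → α) : ℕ :=
  sSup {k : ℕ | ∀ s : Fin m → Bool, atomOf C s ≠ ⊥ →
    k ≤ (Finset.univ.filter (fun i => s i = true)).card}

/-- Kelley's covering number of a family `ℬ` in a Boolean algebra. -/
noncomputable def covNumber {α : Type*} [BooleanAlgebra α] (ℬ : Set α) : ℝ :=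
  sSup { r : ℝ | ∃ n : ℕ, 0 < n ∧ ∃ C : Fin n → α,
    (∀ i, C i ∈ ℬ) ∧ r = (covMult C : ℝ) / n }

/-- The function `h_φ` associated with a submeasure `φ`. -/
noncomputable def hphi {α : Type*} [BooleanAlgebra α] (φ : α → ℝ) (ξ : ℝ) : ℝ :=
  covNumber {A : α | φ A ≤ ξ} / ξ

/-- A submeasure on a Boolean algebra. -/
def IsSubmeasure {α : Type*} [BooleanAlgebra α] (φ : α → ℝ) : Prop :=
  φ ⊥ = 0 ∧ Monotone φ ∧ ∀ a b : α, φ (a ⊔ b) ≤ φ a + φ b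

/-- A diffuse submeasure: the unit can be covered by finitely many elements of
arbitrarily small submeasure. -/
def IsDiffuse {α : Type*} [BooleanAlgebra α] (φ : α → ℝ) : Prop :=
  ∀ ε : ℝ, 0 < ε → ∃ ℬ : Finset α, ℬ.sup id = ⊤ ∧ ∀ B ∈ ℬ, φ B ≤ ε

/-- A (nonnegative, finitely additive) measure on a Boolean algebra. -/
def IsAddMeasure {α : Type*} [BooleanAlgebra α] (μ : α → ℝ) : Prop :=
  μ ⊥ = 0 ∧ (∀ a, 0 ≤ μ a) ∧ ∀ a b : α, Disjoint a b → μ (a ⊔ b) = μ a + μ b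

open Finset Function

section Atoms

variable {α : Type*} [BooleanAlgebra α] {m : ℕ} (C : Fin m → α)

theorem atomOf_le (s : Fin m → Bool) (i : Fin m) :
    atomOf C s ≤ if s i then C i else (C i)ᶜ :=
  inf_le (mem_univ i)

theorem pairwise_disjoint_atomOf : Pairwise (Disjoint on atomOf C) := by
  intro s t hst
  obtain ⟨i, hi⟩ := Function.ne_iff.mp hst
  have hs := atomOf_le C s i
  have ht := atomOf_le C t i
  cases hsi : s i <;> cases hti : t i <;> simp only [hsi, hti] at hi hs ht
  · exact absurd rfl hi
  · exact disjoint_compl_left.mono hs ht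
  · exact disjoint_compl_right.mono hs ht
  · exact absurd rfl hi

theorem sup_atomOf : univ.sup (atomOf C) = ⊤ := by
  -- distribute `⨅ i, (C i ⊔ (C i)ᶜ) = ⊤` over the choices of sides
  have h := inf_sup (univ : Finset (Fin m)) (fun _ => (univ : Finset Bool))
    (fun i b => if b then C i else (C i)ᶜ)
  simp only [Fintype.univ_bool, sup_insert, sup_singleton, if_true, Bool.false_eq_true, if_false,
    sup_compl_eq_top, inf_top] at h
  refine top_le_iff.mp (h ▸ Finset.sup_le fun g _ => ?_)
  exact (inf_attach univ fun i => if g i (mem_univ i) then C i else (C i)ᶜ).le.trans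
    (le_sup (f := atomOf C) (mem_univ fun i => g i (mem_univ i)))

theorem covMult_le_card {s : Fin m → Bool} (hs : atomOf C s ≠ ⊥) :
    covMult C ≤ #{i | s i} :=
  csSup_le ⟨0, fun _ _ => Nat.zero_le _⟩ fun _ hk => hk s hs

end Atoms

namespace IsAddMeasure

variable {α : Type*} [BooleanAlgebra α] {μ : α → ℝ}

theorem mono (hμ : IsAddMeasure μ) : Monotone μ := by
  intro a b hab
  have h := hμ.2.2 a (b \ a) disjoint_sdiff_self_right
  rw [sup_sdiff_cancel_right hab] at h
  linarith [hμ.2.1 (b \ a)]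

theorem sup_eq_sum (hμ : IsAddMeasure μ) {ι : Type*} [DecidableEq ι] {t : Finset ι} {f : ι → α}
    (hf : (t : Set ι).PairwiseDisjoint f) : μ (t.sup f) = ∑ i ∈ t, μ (f i) := by
  induction t using Finset.induction_on with
  | empty => simpa using hμ.1
  | insert a t ha ih =>
    have hdisj : Disjoint (f a) (t.sup f) := Finset.disjoint_sup_right.mpr fun i hi =>
      hf (mem_insert_self a t) (mem_insert_of_mem hi) (ne_of_mem_of_not_mem hi ha).symm
    rw [sup_insert, sum_insert ha, hμ.2.2 _ _ hdisj,
      ih (hf.subset (by simp only [coe_insert, Set.subset_insert]))]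

theorem pos_top (hμ : IsAddMeasure μ) (hne : μ ≠ 0) : 0 < μ ⊤ := by
  obtain ⟨a, ha⟩ := Function.ne_iff.mp hne
  exact lt_of_lt_of_le (lt_of_le_of_ne (hμ.2.1 a) (Ne.symm ha)) (hμ.mono le_top)

theorem sum_atomOf (hμ : IsAddMeasure μ) {m : ℕ} (C : Fin m → α) :
    ∑ s, μ (atomOf C s) = μ ⊤ := by
  rw [← sup_atomOf C, hμ.sup_eq_sum ((pairwise_disjoint_atomOf C).set_pairwise _)]

theorem sum_atomOf_le (hμ : IsAddMeasure μ) {m : ℕ} (C : Fin m → α) (i : Fin m) :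
    ∑ s with s i, μ (atomOf C s) ≤ μ (C i) := by
  rw [← hμ.sup_eq_sum ((pairwise_disjoint_atomOf C).set_pairwise _)]
  refine hμ.mono (Finset.sup_le fun s hs => ?_)
  simpa [(mem_filter.mp hs).2] using atomOf_le C s i

theorem covMult_mul_le_sum (hμ : IsAddMeasure μ) {m : ℕ} (C : Fin m → α) :
    covMult C * μ ⊤ ≤ ∑ i, μ (C i) := by
  calc covMult C * μ ⊤ = ∑ s, covMult C * μ (atomOf C s) := by
        rw [← hμ.sum_atomOf C, mul_sum]
    _ ≤ ∑ s : Fin m → Bool, (#{i | s i} : ℝ) * μ (atomOf C s) := by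
        refine sum_le_sum fun s _ => ?_
        by_cases hs : atomOf C s = ⊥
        · simp [hs, hμ.1]
        · exact mul_le_mul_of_nonneg_right (by exact_mod_cast covMult_le_card C hs) (hμ.2.1 _)
    _ = ∑ i, ∑ s with s i, μ (atomOf C s) := by
        simp only [card_filter, Nat.cast_sum, Nat.cast_ite, Nat.cast_one, Nat.cast_zero, sum_mul,
          ite_mul, one_mul, zero_mul]
        rw [sum_comm]
        simp only [sum_filter]
    _ ≤ ∑ i, μ (C i) := sum_le_sum fun i _ => hμ.sum_atomOf_le C i

theorem covNumber_le (hμ : IsAddMeasure μ) (htop : 0 < μ ⊤) {ℬ : Set α} {ξ : ℝ} (hξ : 0 ≤ ξ)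
    (hℬ : ∀ B ∈ ℬ, μ B ≤ ξ) : covNumber ℬ ≤ ξ / μ ⊤ := by
  refine Real.sSup_le ?_ (by positivity)
  rintro r ⟨n, hn, C, hC, rfl⟩
  rw [div_le_div_iff₀ (by exact_mod_cast hn) htop]
  calc covMult C * μ ⊤ ≤ ∑ i, μ (C i) := hμ.covMult_mul_le_sum C
    _ ≤ ∑ _i : Fin n, ξ := sum_le_sum fun i _ => hℬ _ (hC i)
    _ = ξ * n := by simp [mul_comm]

end IsAddMeasure

theorem hphi_le_of_measure_le_general {α : Type*} [BooleanAlgebra α] (φ : α → ℝ)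
    (μ : α → ℝ) (hμ : IsAddMeasure μ)
    (hle : ∀ a, μ a ≤ φ a) (hne : μ ≠ 0) :
    ∀ ξ : ℝ, 0 < ξ → hphi φ ξ ≤ 1 / μ ⊤ := by
  intro ξ hξ
  have htop := hμ.pos_top hne
  have hcov : covNumber {A | φ A ≤ ξ} ≤ ξ / μ ⊤ :=
    hμ.covNumber_le htop hξ.le fun B hB => (hle B).trans hB
  calc hphi φ ξ ≤ ξ / μ ⊤ / ξ := div_le_div_of_nonneg_right hcov hξ.le
    _ = 1 / μ ⊤ := by field_simp

/-- If a nonzero measure lies below a diffuse submeasure `φ`, then `h_φ ≤ 1/μ(1)`;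
in particular `h_φ` is bounded for non-pathological `φ`. -/
theorem hphi_le_of_measure_le {α : Type*} [BooleanAlgebra α] (φ : α → ℝ)
    (hφ : IsSubmeasure φ) (hd : IsDiffuse φ) (μ : α → ℝ) (hμ : IsAddMeasure μ)
    (hle : ∀ a, μ a ≤ φ a) (hne : μ ≠ 0) :
    ∀ ξ : ℝ, 0 < ξ → hphi φ ξ ≤ 1 / μ ⊤ :=
  hphi_le_of_measure_le_general φ μ hμ hle hne
end

section
/- Every submeasure having covering concentration is diffuse. More concretely: if φ is a submeasure on a Boolean algebra 𝒜 such that for every ε > 0 there is a finite partition of unity ℬ with concentration function α_{𝒳(𝕀,λ,ℬ,φ)}(ε) < 1/2, then for every ε > 0 there exists a finite partition of unity all of whose elements have submeasure < ε. -/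
open MeasureTheory
open scoped Classical

/-- The concentration function of a metric measure space. -/
noncomputable def concFn {X : Type*} [MeasurableSpace X] (μ : Measure X)
    (d : X → X → ℝ) (ε : ℝ) : ℝ :=
  1 - sInf { r : ℝ | ∃ A : Set X, MeasurableSet A ∧ (1 : ℝ) / 2 ≤ (μ A).toReal ∧
    r = (μ {x | ∃ a ∈ A, d a x < ε}).toReal }

/-- Every submeasure having covering concentration is diffuse. -/
theorem diffuse_of_covering_concentration {α : Type*} [BooleanAlgebra α] (φ : α → ℝ)
    (hφ0 : φ ⊥ = 0) (hmono : Monotone φ) (hsub : ∀ a b : α, φ (a ⊔ b) ≤ φ a + φ b)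
    (hcc : ∀ ε : ℝ, 0 < ε → ∃ ℬ : Finset α, (∀ B ∈ ℬ, B ≠ ⊥) ∧ ℬ.sup id = ⊤ ∧
      (∀ B ∈ ℬ, ∀ B' ∈ ℬ, B ≠ B' → Disjoint B B') ∧
      concFn (Measure.pi (fun _ : {B // B ∈ ℬ} => volume.restrict (Set.Icc (0 : ℝ) 1)))
        (fun x y => φ ((ℬ.attach.filter (fun B => x B ≠ y B)).sup (fun B => (B : α)))) ε
        < 1 / 2) :
    ∀ ε : ℝ, 0 < ε → ∃ ℬ : Finset α, (∀ B ∈ ℬ, B ≠ ⊥) ∧ ℬ.sup id = ⊤ ∧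
      (∀ B ∈ ℬ, ∀ B' ∈ ℬ, B ≠ B' → Disjoint B B') ∧ ∀ B ∈ ℬ, φ B < ε := by
  intro ε hε
  obtain ⟨ℬ, h1, h2, h3, h4⟩ := hcc ε hε
  refine ⟨ℬ, h1, h2, h3, ?_⟩
  intro B0 hB0
  by_contra hge
  push_neg at hge
  set μ := Measure.pi (fun _ : {B // B ∈ ℬ} => volume.restrict (Set.Icc (0 : ℝ) 1)) with hμdef
  set d : ({B // B ∈ ℬ} → ℝ) → ({B // B ∈ ℬ} → ℝ) → ℝ :=
    fun x y => φ ((ℬ.attach.filter (fun B => x B ≠ y B)).sup (fun B => (B : α))) with hd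
  let i0 : {B // B ∈ ℬ} := ⟨B0, hB0⟩
  set A : Set ({B // B ∈ ℬ} → ℝ) := (fun x : {B // B ∈ ℬ} → ℝ => x i0) ⁻¹' Set.Icc (0:ℝ) (1/2)
    with hA
  have hAmeas : MeasurableSet A := measurableSet_Icc.preimage (measurable_pi_apply i0)
  have hμA : μ A = ENNReal.ofReal (1/2) := by
    have hApi : A = Set.pi Set.univ
        (fun i : {B // B ∈ ℬ} => if i = i0 then Set.Icc (0:ℝ) (1/2) else Set.univ) := by
      ext x
      simp only [hA, Set.mem_preimage, Set.mem_pi, Set.mem_univ, forall_true_left]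
      constructor
      · intro h i
        by_cases hi : i = i0
        · rw [if_pos hi, hi]; exact h
        · rw [if_neg hi]; trivial
      · intro h
        simpa using h i0
    rw [hApi, hμdef, MeasureTheory.Measure.pi_pi]
    rw [Finset.prod_eq_single i0]
    · rw [if_pos rfl, Measure.restrict_apply measurableSet_Icc,
        Set.inter_eq_left.mpr (Set.Icc_subset_Icc le_rfl (by norm_num)),
        Real.volume_Icc]
      norm_num
    · intro i _ hi
      rw [if_neg hi, Measure.restrict_apply MeasurableSet.univ, Set.univ_inter, Real.volume_Icc]
      norm_num
    · intro h; exact absurd (Finset.mem_univ i0) h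
  have hμAne : μ A ≠ ⊤ := by rw [hμA]; exact ENNReal.ofReal_ne_top
  have hnbd : {x | ∃ a ∈ A, d a x < ε} ⊆ A := by
    rintro x ⟨a, ha, hdax⟩
    have hdax' : φ ((ℬ.attach.filter (fun B => a B ≠ x B)).sup (fun B => (B : α))) < ε := hdax
    have hax : a i0 = x i0 := by
      by_contra hne
      have hi0mem : i0 ∈ ℬ.attach.filter (fun B => a B ≠ x B) := by
        simp [Finset.mem_filter, hne]
      have hle : B0 ≤ (ℬ.attach.filter (fun B => a B ≠ x B)).sup
          (fun B : {B // B ∈ ℬ} => (B : α)) :=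
        Finset.le_sup (f := fun B : {B // B ∈ ℬ} => (B : α)) hi0mem
      have := hmono hle
      linarith
    simp only [hA, Set.mem_preimage] at ha ⊢
    rw [← hax]; exact ha
  set S := { r : ℝ | ∃ A' : Set ({B // B ∈ ℬ} → ℝ), MeasurableSet A' ∧
      (1:ℝ)/2 ≤ (μ A').toReal ∧ r = (μ {x | ∃ a ∈ A', d a x < ε}).toReal } with hS
  have hmem : (μ {x | ∃ a ∈ A, d a x < ε}).toReal ∈ S :=
    ⟨A, hAmeas, by rw [hμA, ENNReal.toReal_ofReal (by norm_num)], rfl⟩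
  have hbdd : BddBelow S := ⟨0, fun r hr => by
    obtain ⟨A', _, _, hr⟩ := hr
    rw [hr]; exact ENNReal.toReal_nonneg⟩
  have hle : sInf S ≤ 1/2 := by
    refine (csInf_le hbdd hmem).trans ?_
    have := ENNReal.toReal_mono hμAne (measure_mono hnbd)
    rw [hμA, ENNReal.toReal_ofReal (by norm_num)] at this
    exact this
  have hconc : concFn μ d ε = 1 - sInf S := rfl
  rw [hconc] at h4
  linarith
end
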